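/- Let n ≥ 4 be an integer and x ≥ 0 a real number. Then the second central moment of the second-order modified Baskakov–Durrmeyer operator satisfies V̂_{n,2}((t−x)²; x) = (−3 − 16x − 16x²)/((n−2)(n−3)), where the operator is applied to the function t ↦ (t − x)². -/

import Mathlib

open MeasureTheory Filter Topology

/-- Baskakov basis function `p_{n,k}(x) = C(n+k-1, k) x^k / (1+x)^{n+k}`. -/
noncomputable def bask (n k : ℕ) (x : ℝ) : ℝ :=
  (Nat.choose (n + k - 1) k : ℝ) * x ^ k / (1 + x) ^ (n + k)

/-- Second-order modified basis
`p^2_{n,k}(x) = (3/2 + 2x - n x(1+x)) p_{n+2,k}(x) + 2n x(1+x) p_{n+2,k-1}(x)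
  + (-1/2 - 2x - n x(1+x)) p_{n+2,k-2}(x)`, with `p_{n+2,j} = 0` for `j < 0`. -/
noncomputable def p2 (n k : ℕ) (x : ℝ) : ℝ :=
  (3 / 2 + 2 * x - (n : ℝ) * x * (1 + x)) * bask (n + 2) k x
    + 2 * (n : ℝ) * x * (1 + x) * (if k = 0 then 0 else bask (n + 2) (k - 1) x)
    + (-(1 / 2) - 2 * x - (n : ℝ) * x * (1 + x)) * (if k < 2 then 0 else bask (n + 2) (k - 2) x)

/-- Second-order modified Baskakov–Durrmeyer operator. -/
noncomputable def V2 (n : ℕ) (f : ℝ → ℝ) (x : ℝ) : ℝ :=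
  ((n : ℝ) - 1) * ∑' k : ℕ, p2 n k x * ∫ t in Set.Ioi (0 : ℝ), bask n k t * f t

/-!
Two identities for the Baskakov basis carry the computation:
`n t p_{n+1,k}(t) = (k+1) p_{n,k+1}(t)` and `n (1+t) p_{n+1,k}(t) = (n+k) p_{n,k}(t)`.
Subtracting them gives a recursion in `k` for `∫₀^∞ p_{n,k} = 1/(n-1)`, and the first one trades
each factor `t` for a lower `n`, so `∫₀^∞ p_{n,k}(t) (t-x)² dt` is an explicit quadratic in `k`.
Read in `x`, the first identity also turns the moments `∑_k k p_{m,k}(x)` and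
`∑_k k(k-1) p_{m,k}(x)` into the negative binomial series `∑_k p_{m',k}(x) = 1`. After re-indexing
the shifted terms of `p2`, the operator applied to `(t-x)²` is a rational function of `n` and `x`.
-/

open Set

lemma bask_zero_right (n : ℕ) : bask n 0 = fun t => ((1 + t) ^ n)⁻¹ := by
  ext t
  simp [bask]

lemma natCast_mul_mul_bask_succ (n k : ℕ) (t : ℝ) :
    (n : ℝ) * (t * bask (n + 1) k t) = (k + 1) * bask n (k + 1) t := by
  have hchoose : ((n + k).choose (k + 1) : ℝ) * (k + 1) = (n + k).choose k * n := by
    have h := (n + k).choose_succ_right_eq k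
    rw [Nat.add_sub_cancel] at h
    exact_mod_cast h
  rw [bask, bask, show n + 1 + k - 1 = n + k by omega, show n + (k + 1) - 1 = n + k by omega,
    show n + 1 + k = n + (k + 1) by omega, pow_succ]
  linear_combination (-(t ^ k * t) / (1 + t) ^ (n + (k + 1))) * hchoose

lemma natCast_mul_one_add_mul_bask_succ {n : ℕ} (hn : 1 ≤ n) (k : ℕ) {t : ℝ}
    (ht : 1 + t ≠ 0) :
    (n : ℝ) * ((1 + t) * bask (n + 1) k t) = (n + k) * bask n k t := by
  obtain ⟨m, rfl⟩ : ∃ m, n = m + 1 := ⟨n - 1, by omega⟩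
  have hchoose : ((m + k).choose k : ℝ) * (m + k + 1) = (m + k + 1).choose k * (m + 1) := by
    have h := (m + k).choose_mul_succ_eq k
    rw [show m + k + 1 - k = m + 1 by omega] at h
    exact_mod_cast h
  rw [bask, bask, show m + 1 + 1 + k - 1 = m + k + 1 by omega,
    show m + 1 + k - 1 = m + k by omega, show m + 1 + 1 + k = m + 1 + k + 1 by omega, pow_succ]
  field_simp
  push_cast
  linear_combination (-t ^ k) * hchoose

lemma bask_succ_right {n : ℕ} (hn : 1 ≤ n) (k : ℕ) {t : ℝ} (ht : 1 + t ≠ 0) :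
    bask n (k + 1) t = ((n + k) * bask n k t - n * bask (n + 1) k t) / (k + 1) := by
  rw [eq_div_iff (by positivity)]
  linear_combination (natCast_mul_one_add_mul_bask_succ hn k ht)
    - natCast_mul_mul_bask_succ n k t

lemma hasDerivAt_neg_inv_one_add_pow (m : ℕ) {t : ℝ} (ht : 1 + t ≠ 0) :
    HasDerivAt (fun s : ℝ => -((m + 1) * (1 + s) ^ (m + 1))⁻¹) ((1 + t) ^ (m + 2))⁻¹ t := by
  have h := ((((hasDerivAt_id' t).const_add 1).pow (m + 1)).const_mul ((m : ℝ) + 1)).inv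
    (mul_ne_zero (by positivity) (pow_ne_zero _ ht))
  refine h.neg.congr_deriv ?_
  push_cast
  simp only [Pi.pow_apply]
  field_simp
  ring

lemma tendsto_neg_inv_one_add_pow (m : ℕ) :
    Tendsto (fun s : ℝ => -((m + 1) * (1 + s) ^ (m + 1))⁻¹) atTop (𝓝 0) := by
  have h : Tendsto (fun s : ℝ => (m + 1) * (1 + s) ^ (m + 1)) atTop atTop :=
    ((tendsto_pow_atTop (Nat.succ_ne_zero m)).comp
      (tendsto_atTop_add_const_left _ 1 tendsto_id)).const_mul_atTop (by positivity)
  simpa using h.inv_tendsto_atTop.neg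

lemma integrableOn_inv_one_add_pow (m : ℕ) :
    IntegrableOn (fun t : ℝ => ((1 + t) ^ (m + 2))⁻¹) (Ioi 0) :=
  integrableOn_Ioi_deriv_of_nonneg'
    (fun t ht => hasDerivAt_neg_inv_one_add_pow m (by linarith [mem_Ici.mp ht]))
    (fun t ht => by have := mem_Ioi.mp ht; positivity) (tendsto_neg_inv_one_add_pow m)

lemma integral_inv_one_add_pow (m : ℕ) :
    ∫ t in Ioi (0 : ℝ), ((1 + t) ^ (m + 2))⁻¹ = 1 / (m + 1) := by
  rw [integral_Ioi_of_hasDerivAt_of_nonneg'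
    (fun t ht => hasDerivAt_neg_inv_one_add_pow m (by linarith [mem_Ici.mp ht]))
    (fun t ht => by have := mem_Ioi.mp ht; positivity) (tendsto_neg_inv_one_add_pow m)]
  simp

lemma integrableOn_bask {n : ℕ} (hn : 2 ≤ n) (k : ℕ) : IntegrableOn (bask n k) (Ioi 0) := by
  induction k generalizing n with
  | zero =>
    obtain ⟨m, rfl⟩ : ∃ m, n = m + 2 := ⟨n - 2, by omega⟩
    rw [bask_zero_right]
    exact integrableOn_inv_one_add_pow m
  | succ k ih =>
    refine IntegrableOn.congr_fun ?_
      (fun t ht => (bask_succ_right (by omega) k (by linarith [mem_Ioi.mp ht])).symm)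
      measurableSet_Ioi
    exact (((ih hn).const_mul _).sub ((ih (by omega)).const_mul _)).div_const _

lemma integral_bask {n : ℕ} (hn : 2 ≤ n) (k : ℕ) :
    ∫ t in Ioi (0 : ℝ), bask n k t = 1 / (n - 1) := by
  induction k generalizing n with
  | zero =>
    obtain ⟨m, rfl⟩ : ∃ m, n = m + 2 := ⟨n - 2, by omega⟩
    rw [bask_zero_right, integral_inv_one_add_pow]
    push_cast
    ring
  | succ k ih =>
    have hn' : (2 : ℝ) ≤ n := by exact_mod_cast hn
    have hn1 : (n : ℝ) - 1 ≠ 0 := by linarith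
    have hn0 : (n : ℝ) ≠ 0 := by linarith
    rw [setIntegral_congr_fun measurableSet_Ioi
        fun t ht => bask_succ_right (by omega) k (by linarith [mem_Ioi.mp ht]),
      integral_div, integral_sub ((integrableOn_bask hn k).const_mul _)
        ((integrableOn_bask (by omega) k).const_mul _),
      integral_const_mul, integral_const_mul, ih hn, ih (by omega)]
    push_cast
    rw [add_sub_cancel_right]
    field_simp
    ring

lemma bask_succ_mul_mul {n : ℕ} (hn : n ≠ 0) (k : ℕ) (t y : ℝ) :
    bask (n + 1) k t * (t * y) = (k + 1) / n * (bask n (k + 1) t * y) := by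
  have hn' : (n : ℝ) ≠ 0 := Nat.cast_ne_zero.mpr hn
  field_simp
  linear_combination y * natCast_mul_mul_bask_succ n k t

lemma integrableOn_bask_mul_pow {n m : ℕ} (h : m + 2 ≤ n) (k : ℕ) :
    IntegrableOn (fun t => bask n k t * t ^ m) (Ioi 0) := by
  induction m generalizing n k with
  | zero => simpa using integrableOn_bask h k
  | succ m ih =>
    obtain ⟨n, rfl⟩ : ∃ n', n = n' + 1 := ⟨n - 1, by omega⟩
    simp_rw [pow_succ', bask_succ_mul_mul (by omega : n ≠ 0)]
    exact (ih (by omega) (k + 1)).const_mul _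

lemma integral_bask_succ_mul_pow_succ {n : ℕ} (hn : n ≠ 0) (k m : ℕ) :
    ∫ t in Ioi (0 : ℝ), bask (n + 1) k t * t ^ (m + 1)
      = (k + 1) / n * ∫ t in Ioi (0 : ℝ), bask n (k + 1) t * t ^ m := by
  simp_rw [pow_succ', bask_succ_mul_mul hn, integral_const_mul]

lemma integral_bask_mul_id {n : ℕ} (hn : 3 ≤ n) (k : ℕ) :
    ∫ t in Ioi (0 : ℝ), bask n k t * t = (k + 1) / ((n - 1) * (n - 2)) := by
  obtain ⟨n, rfl⟩ : ∃ n', n = n' + 1 := ⟨n - 1, by omega⟩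
  have h := integral_bask_succ_mul_pow_succ (by omega : n ≠ 0) k 0
  simp only [zero_add, pow_one, pow_zero, mul_one] at h
  have hn' : (2 : ℝ) ≤ n := by exact_mod_cast (by omega : 2 ≤ n)
  have hn0 : (n : ℝ) ≠ 0 := by linarith
  have hn1 : (n : ℝ) - 1 ≠ 0 := by linarith
  rw [h, integral_bask (by omega), show ((n + 1 : ℕ) : ℝ) - 1 = n by push_cast; ring,
    show ((n + 1 : ℕ) : ℝ) - 2 = n - 1 by push_cast; ring]
  field_simp

lemma integral_bask_mul_sq {n : ℕ} (hn : 4 ≤ n) (k : ℕ) :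
    ∫ t in Ioi (0 : ℝ), bask n k t * t ^ 2
      = (k + 1) * (k + 2) / ((n - 1) * (n - 2) * (n - 3)) := by
  obtain ⟨n, rfl⟩ : ∃ n', n = n' + 1 := ⟨n - 1, by omega⟩
  rw [integral_bask_succ_mul_pow_succ (by omega : n ≠ 0)]
  simp only [pow_one]
  have hn' : (3 : ℝ) ≤ n := by exact_mod_cast (by omega : 3 ≤ n)
  have hn0 : (n : ℝ) ≠ 0 := by linarith
  rw [integral_bask_mul_id (by omega), show ((n + 1 : ℕ) : ℝ) - 1 = n by push_cast; ring,
    show ((n + 1 : ℕ) : ℝ) - 2 = n - 1 by push_cast; ring,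
    show ((n + 1 : ℕ) : ℝ) - 3 = n - 2 by push_cast; ring]
  push_cast
  field_simp
  ring

lemma integral_bask_mul_sub_sq {n : ℕ} (hn : 4 ≤ n) (k : ℕ) (x : ℝ) :
    ∫ t in Ioi (0 : ℝ), bask n k t * (t - x) ^ 2
      = (k + 1) * (k + 2) / ((n - 1) * (n - 2) * (n - 3))
        - 2 * x * ((k + 1) / ((n - 1) * (n - 2))) + x ^ 2 * (1 / (n - 1)) := by
  have h2 := integrableOn_bask_mul_pow (n := n) (m := 2) (by omega) k
  have h1 := (integrableOn_bask_mul_pow (n := n) (m := 1) (by omega) k).const_mul (2 * x)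
  have h0 := (integrableOn_bask (n := n) (by omega) k).const_mul (x ^ 2)
  simp only [pow_one] at h1
  have hexpand : (fun t => bask n k t * (t - x) ^ 2)
      = fun t => bask n k t * t ^ 2 - 2 * x * (bask n k t * t) + x ^ 2 * bask n k t := by
    ext t; ring
  rw [hexpand, integral_add (by exact h2.sub h1) h0, integral_sub h2 h1, integral_const_mul,
    integral_const_mul, integral_bask_mul_sq hn, integral_bask_mul_id (by omega),
    integral_bask (by omega)]

lemma hasSum_bask (m : ℕ) {x : ℝ} (hx : 0 ≤ x) : HasSum (fun k => bask m k x) 1 := by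
  rcases m with _ | j
  · convert hasSum_single 0 fun k hk => ?_
    · simp [bask]
    · simp [bask, Nat.choose_eq_zero_of_lt (by omega : k - 1 < k)]
  have h1x : 0 < 1 + x := by linarith
  have hr : ‖x / (1 + x)‖ < 1 := by
    rw [Real.norm_eq_abs, abs_of_nonneg (by positivity), div_lt_one h1x]
    linarith
  have H := (hasSum_choose_mul_geometric_of_norm_lt_one j hr).mul_left ((1 + x) ^ (j + 1))⁻¹
  rw [one_sub_div h1x.ne', add_sub_cancel_right, div_pow, one_pow, one_div_div, div_one,
    inv_mul_cancel₀ (by positivity)] at H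
  refine H.congr_fun fun k => ?_
  rw [bask, show j + 1 + k - 1 = k + j by omega, ← Nat.choose_symm_add, div_pow, pow_add]
  field_simp

lemma hasSum_of_hasSum_nat_add {G : Type*} [AddCommGroup G] [TopologicalSpace G]
    [IsTopologicalAddGroup G] {f : ℕ → G} {s : G} (j : ℕ) (hf : ∀ k < j, f k = 0)
    (h : HasSum (fun k => f (k + j)) s) : HasSum f s := by
  rw [← hasSum_nat_add_iff' j]
  rwa [Finset.sum_eq_zero fun k hk => hf k (Finset.mem_range.mp hk), sub_zero]

lemma hasSum_bask_mul_natCast_mul (m : ℕ) {x s : ℝ} {f : ℕ → ℝ}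
    (h : HasSum (fun k => bask (m + 1) k x * f (k + 1)) s) :
    HasSum (fun k => bask m k x * (k * f k)) (m * x * s) := by
  refine hasSum_of_hasSum_nat_add 1 (by simp) ?_
  refine (h.mul_left (m * x)).congr_fun fun k => ?_
  push_cast
  linear_combination -f (k + 1) * natCast_mul_mul_bask_succ m k x

lemma hasSum_bask_mul_quadratic (m : ℕ) {x : ℝ} (hx : 0 ≤ x) {A B C : ℝ} {f : ℕ → ℝ}
    (hf : ∀ k : ℕ, f k = A * (k + 1) * (k + 2) + B * (k + 1) + C) (j : ℕ) :
    HasSum (fun k => bask m k x * f (k + j))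
      (A * (m * (m + 1) * x ^ 2 + (2 * j + 4) * m * x + (j + 1) * (j + 2))
        + B * (m * x + j + 1) + C) := by
  have hlin (i : ℕ) : HasSum (fun k => bask i k x * (k * 1)) (i * x * 1) :=
    hasSum_bask_mul_natCast_mul i (hasSum_bask (i + 1) hx |>.congr_fun fun k => mul_one _)
  have hquad : HasSum (fun k => bask m k x * (k * (k - 1))) (m * x * ((m + 1 : ℕ) * x * 1)) :=
    hasSum_bask_mul_natCast_mul m (f := fun k => (k : ℝ) - 1)
      ((hlin (m + 1)).congr_fun fun k => by push_cast; ring)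
  convert! ((hquad.mul_left A).add ((hlin m).mul_left (A * (2 * j + 4) + B))).add
    ((hasSum_bask m hx).mul_left (A * (j + 1) * (j + 2) + B * (j + 1) + C)) using 1
  · ext k
    rw [hf]
    push_cast
    ring
  · push_cast
    ring

lemma hasSum_p2_mul (n : ℕ) (x : ℝ) {f S : ℕ → ℝ}
    (h : ∀ j, HasSum (fun k => bask (n + 2) k x * f (k + j)) (S j)) :
    HasSum (fun k => p2 n k x * f k)
      ((3 / 2 + 2 * x - n * x * (1 + x)) * S 0 + 2 * n * x * (1 + x) * S 1
        + (-(1 / 2) - 2 * x - n * x * (1 + x)) * S 2) := by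
  have h₀ : HasSum (fun k => bask (n + 2) k x * f k) (S 0) := by simpa using h 0
  have h₁ : HasSum (fun k => (if k = 0 then 0 else bask (n + 2) (k - 1) x) * f k) (S 1) :=
    hasSum_of_hasSum_nat_add 1 (by simp) (by simpa using h 1)
  have h₂ : HasSum (fun k => (if k < 2 then 0 else bask (n + 2) (k - 2) x) * f k) (S 2) :=
    hasSum_of_hasSum_nat_add 2 (fun k hk => by simp [hk]) (by simpa using h 2)
  refine (((h₀.mul_left _).add (h₁.mul_left _)).add (h₂.mul_left _)).congr_fun fun k => ?_
  simp only [p2]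
  ring

theorem V2_central_moment_two (n : ℕ) (hn : 4 ≤ n) (x : ℝ) (hx : 0 ≤ x) :
    V2 n (fun t => (t - x) ^ 2) x =
      (-3 - 16 * x - 16 * x ^ 2) / (((n : ℝ) - 2) * ((n : ℝ) - 3)) := by
  set A : ℝ := 1 / ((n - 1) * (n - 2) * (n - 3)) with hA
  set B : ℝ := -2 * x / ((n - 1) * (n - 2)) with hB
  set C : ℝ := x ^ 2 / (n - 1) with hC
  have hmoment (k : ℕ) : ∫ t in Ioi (0 : ℝ), bask n k t * (t - x) ^ 2
      = A * (k + 1) * (k + 2) + B * (k + 1) + C := by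
    rw [integral_bask_mul_sub_sq hn]
    ring
  rw [V2, (hasSum_p2_mul n x (hasSum_bask_mul_quadratic (n + 2) hx hmoment)).tsum_eq, hA, hB, hC]
  have hn' : (4 : ℝ) ≤ n := by exact_mod_cast hn
  have hn1 : (n : ℝ) - 1 ≠ 0 := by linarith
  have hn2 : (n : ℝ) - 2 ≠ 0 := by linarith
  have hn3 : (n : ℝ) - 3 ≠ 0 := by linarith
  push_cast
  field_simp
  ring
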